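/- arXiv:1707.08075 — 2 statements merged into one kernel-verified Lean document; each statement's English description precedes it below -/
import Mathlib

section
/- Let $K$ be a field, $G = \mathrm{SL}_2(K)$ and $B$ the subgroup of upper-triangular matrices. Then $B$ is a maximal subgroup of $G$: there is no subgroup $H$ with $B \subsetneq H \subsetneq G$. -/
open Matrix Matrix.SpecialLinearGroup

/-- The Borel subgroup of upper-triangular matrices in `SL₂(K)`. -/
def upperTriangular (K : Type*) [Field K] :
    Subgroup (Matrix.SpecialLinearGroup (Fin 2) K) where
  carrier := {g | (g : Matrix (Fin 2) (Fin 2) K) 1 0 = 0}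
  one_mem' := by simp
  mul_mem' := by
    intro a b ha hb
    show ((a : Matrix (Fin 2) (Fin 2) K) * b) 1 0 = 0
    rw [Matrix.mul_apply, Fin.sum_univ_two]
    simp only [Set.mem_setOf_eq] at ha hb
    rw [ha, hb]; ring
  inv_mem' := by
    intro a ha
    show ((a⁻¹ : Matrix.SpecialLinearGroup (Fin 2) K) :
        Matrix (Fin 2) (Fin 2) K) 1 0 = 0
    rw [Matrix.SpecialLinearGroup.coe_inv, Matrix.adjugate_fin_two]
    simpa using ha

/-- The action of `SL₂(K)` on the projective line `ℙ¹(K)`. -/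
noncomputable def projAct {K : Type*} [Field K]
    (g : Matrix.SpecialLinearGroup (Fin 2) K) :
    Projectivization K (Fin 2 → K) → Projectivization K (Fin 2 → K) :=
  Projectivization.map (Matrix.SpecialLinearGroup.toLin' g).toLinearMap
    (Matrix.SpecialLinearGroup.toLin' g).injective

/-- The point `∞ = [1 : 0]` of `ℙ¹(K)`. -/
noncomputable def inftyPt (K : Type*) [Field K] : Projectivization K (Fin 2 → K) :=
  Projectivization.mk K ![1, 0] (by
    intro h
    simpa using congrFun h 0)

/-!
Every `g ∈ SL₂(K)` with `g₁₀ ≠ 0` lies in the double coset `B w B` of the Weyl element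
`w = !![0, -1; 1, 0]`, so `SL₂(K) = B ∪ B w B` (Bruhat decomposition). A subgroup `H` strictly
containing `B` contains some element of `B w B`, hence `w`, hence all of `B ∪ B w B`.
-/

namespace SL2

variable {K : Type*} [Field K]

def weylElt (K : Type*) [Field K] : SpecialLinearGroup (Fin 2) K :=
  ⟨!![0, -1; 1, 0], by simp [det_fin_two_of]⟩

theorem mem_upperTriangular_iff {g : SpecialLinearGroup (Fin 2) K} :
    g ∈ upperTriangular K ↔ (g : Matrix (Fin 2) (Fin 2) K) 1 0 = 0 :=
  Iff.rfl

theorem weylElt_notMem_upperTriangular : weylElt K ∉ upperTriangular K := by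
  rw [mem_upperTriangular_iff]
  simp [weylElt]

theorem upperTriangular_ne_top : upperTriangular K ≠ ⊤ := fun h =>
  weylElt_notMem_upperTriangular (h ▸ Subgroup.mem_top _)

theorem eq_mul_weyl_mul_of_det_eq_one {a b c d : K} (hc : c ≠ 0) (hdet : a * d - b * c = 1) :
    !![a, b; c, d] = !![1, a / c; 0, 1] * !![0, -1; 1, 0] * !![c, d; 0, c⁻¹] := by
  have hb : b = (a * d - 1) / c := by field_simp; linear_combination -hdet
  rw [hb]
  ext i j
  fin_cases i <;> fin_cases j <;> simp [field, sub_eq_add_neg]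

theorem exists_mem_upperTriangular_eq_mul_weylElt_mul {g : SpecialLinearGroup (Fin 2) K}
    (hg : g ∉ upperTriangular K) :
    ∃ b₁ ∈ upperTriangular K, ∃ b₂ ∈ upperTriangular K, g = b₁ * weylElt K * b₂ := by
  have hc : g 1 0 ≠ 0 := hg
  have hdet : g 0 0 * g 1 1 - g 0 1 * g 1 0 = 1 := by rw [← det_fin_two]; exact g.det_coe
  refine ⟨⟨!![1, g 0 0 / g 1 0; 0, 1], by simp [det_fin_two_of]⟩, rfl,
    ⟨!![g 1 0, g 1 1; 0, (g 1 0)⁻¹], by simp [det_fin_two_of, hc]⟩, rfl,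
    Subtype.ext ((eta_fin_two _).trans (eq_mul_weyl_mul_of_det_eq_one hc hdet))⟩

theorem weylElt_mem_of_upperTriangular_lt {H : Subgroup (SpecialLinearGroup (Fin 2) K)}
    (hH : upperTriangular K < H) : weylElt K ∈ H := by
  obtain ⟨g, hgH, hgB⟩ := SetLike.exists_of_lt hH
  obtain ⟨b₁, hb₁, b₂, hb₂, rfl⟩ := exists_mem_upperTriangular_eq_mul_weylElt_mul hgB
  have hw : weylElt K = b₁⁻¹ * (b₁ * weylElt K * b₂) * b₂⁻¹ := by group
  rw [hw]
  exact mul_mem (mul_mem (inv_mem (hH.le hb₁)) hgH) (inv_mem (hH.le hb₂))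

theorem eq_top_of_upperTriangular_le_of_weylElt_mem {H : Subgroup (SpecialLinearGroup (Fin 2) K)}
    (hB : upperTriangular K ≤ H) (hw : weylElt K ∈ H) : H = ⊤ := by
  refine eq_top_iff.2 fun g _ => ?_
  by_cases hg : g ∈ upperTriangular K
  · exact hB hg
  · obtain ⟨b₁, hb₁, b₂, hb₂, rfl⟩ := exists_mem_upperTriangular_eq_mul_weylElt_mul hg
    exact mul_mem (mul_mem (hB hb₁) hw) (hB hb₂)

end SL2

/-- `B` is a maximal subgroup of `SL₂(K)`: there is no subgroup strictly between
`B` and `G`, and `B ≠ G`. -/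
theorem borel_is_maximal (K : Type*) [Field K] :
    upperTriangular K ≠ ⊤ ∧
      ∀ H : Subgroup (Matrix.SpecialLinearGroup (Fin 2) K),
        upperTriangular K < H → H = ⊤ :=
  ⟨SL2.upperTriangular_ne_top, fun _ hH =>
    SL2.eq_top_of_upperTriangular_le_of_weylElt_mem hH.le (SL2.weylElt_mem_of_upperTriangular_lt hH)⟩
end

section
/- Let $q, w \in \mathbb{C}$ with $|q| < |w| < |q|^{-1}$, $w \neq 1$, and $q \neq 0$ implies convergence of the following series. Then $\sum_{n \in \mathbb{Z}} \frac{q^n w}{(1 - q^n w)^2} = \frac{w}{(1-w)^2} + \sum_{n=1}^{\infty} \sum_{m=1}^{\infty} m\, q^{nm} (w^m + w^{-m})$, where the double series converges absolutely. -/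
/-!
Expanding `x / (1 - x)² = ∑_{m ≥ 1} m xᵐ` at `x = qⁿw` for `n ≥ 1`, and at `x = qⁿw⁻¹` for the
terms with exponent `-n` (using `y⁻¹ / (1 - y⁻¹)² = y / (1 - y)²`), turns each half of the sum over
`ℤ` into the fibrewise sums of a double series over `ℕ × ℕ`. Since `‖q‖ < 1` and `‖qw^{±1}‖ < 1`,
the double series is dominated by `‖q‖ⁿ · (m + 1) ‖qw^{±1}‖^{m+1}`, so it is absolutely summable
and may be summed fibrewise.
-/

theorem inv_div_one_sub_inv_sq {K : Type*} [Field K] (y : K) :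
    y⁻¹ / (1 - y⁻¹) ^ 2 = y / (1 - y) ^ 2 := by
  rcases eq_or_ne y 0 with rfl | hy0
  · simp
  rcases eq_or_ne y 1 with rfl | hy1
  · simp
  have : 1 - y ≠ 0 := sub_ne_zero.mpr (Ne.symm hy1)
  field_simp
  ring

section
variable {𝕜 : Type*} [NormedField 𝕜]

theorem hasSum_succ_mul_pow_succ {x : 𝕜} (hx : ‖x‖ < 1) :
    HasSum (fun m : ℕ => ((m : 𝕜) + 1) * x ^ (m + 1)) (x / (1 - x) ^ 2) := by
  have h := (hasSum_nat_add_iff' (f := fun m : ℕ => (m : 𝕜) * x ^ m) 1).mpr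
    (hasSum_coe_mul_geometric_of_norm_lt_one hx)
  rw [Finset.sum_range_one, Nat.cast_zero, zero_mul, sub_zero] at h
  simpa only [Nat.cast_add, Nat.cast_one] using h

theorem norm_pow_succ_mul (q x : 𝕜) (n : ℕ) : ‖q ^ (n + 1) * x‖ = ‖q‖ ^ n * ‖q * x‖ := by
  rw [pow_succ, mul_assoc, norm_mul, norm_pow]

theorem summable_norm_lambert_double_series [CompleteSpace 𝕜] {q x : 𝕜} (hq : ‖q‖ < 1)
    (hqx : ‖q * x‖ < 1) :
    Summable fun p : ℕ × ℕ => ‖((p.2 : 𝕜) + 1) * q ^ ((p.1 + 1) * (p.2 + 1)) * x ^ (p.2 + 1)‖ := by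
  have hgeom : Summable fun n : ℕ => ‖q‖ ^ n := summable_geometric_of_lt_one (norm_nonneg q) hq
  have hcoef : Summable fun m : ℕ => ((m : ℝ) + 1) * ‖q * x‖ ^ (m + 1) :=
    (hasSum_succ_mul_pow_succ (by rwa [norm_norm])).summable
  refine (hgeom.mul_of_nonneg hcoef (fun _ => by positivity) fun _ => by positivity).of_nonneg_of_le
    (fun _ => norm_nonneg _) fun ⟨n, m⟩ => ?_
  have hcast : ‖((m : 𝕜) + 1)‖ ≤ (m : ℝ) + 1 := by
    simpa using Nat.norm_cast_le (α := 𝕜) (m + 1)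
  have hpow : (‖q‖ ^ n) ^ (m + 1) ≤ ‖q‖ ^ n :=
    pow_le_of_le_one (by positivity) (pow_le_one₀ (norm_nonneg q) hq.le) m.succ_ne_zero
  calc ‖((m : 𝕜) + 1) * q ^ ((n + 1) * (m + 1)) * x ^ (m + 1)‖
      = ‖((m : 𝕜) + 1)‖ * (‖q‖ ^ n) ^ (m + 1) * ‖q * x‖ ^ (m + 1) := by
        rw [mul_assoc, pow_mul, ← mul_pow, norm_mul, norm_pow, norm_pow_succ_mul, mul_pow,
          mul_assoc]
    _ ≤ ((m : ℝ) + 1) * (‖q‖ ^ n) ^ (m + 1) * ‖q * x‖ ^ (m + 1) := by gcongr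
    _ ≤ ‖q‖ ^ n * (((m : ℝ) + 1) * ‖q * x‖ ^ (m + 1)) := by
        nlinarith [hpow, show 0 ≤ ((m : ℝ) + 1) * ‖q * x‖ ^ (m + 1) by positivity]

theorem hasSum_lambert_double_series [CompleteSpace 𝕜] {q x : 𝕜} (hq : ‖q‖ < 1)
    (hqx : ‖q * x‖ < 1) :
    HasSum (fun n : ℕ => q ^ (n + 1) * x / (1 - q ^ (n + 1) * x) ^ 2)
      (∑' p : ℕ × ℕ, ((p.2 : 𝕜) + 1) * q ^ ((p.1 + 1) * (p.2 + 1)) * x ^ (p.2 + 1)) := by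
  refine (summable_norm_lambert_double_series hq hqx).of_norm.hasSum.prod_fiberwise
    fun n => ?_
  have hlt : ‖q ^ (n + 1) * x‖ < 1 := by
    rw [norm_pow_succ_mul]
    exact (mul_le_of_le_one_left (norm_nonneg _) (pow_le_one₀ (norm_nonneg q) hq.le)).trans_lt hqx
  simpa only [pow_mul, mul_assoc, mul_pow] using hasSum_succ_mul_pow_succ hlt

end

theorem tate_x_series_rearrangement_general (q w : ℂ)
    (h1 : ‖q‖ < ‖w‖)
    (h2 : ‖w‖ < (‖q‖)⁻¹) :
    (∑' n : ℤ, q ^ n * w / (1 - q ^ n * w) ^ 2) =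
      w / (1 - w) ^ 2 +
        ∑' p : ℕ × ℕ, ((p.2 + 1 : ℂ) * q ^ ((p.1 + 1) * (p.2 + 1)) *
          (w ^ (p.2 + 1) + w ^ (-(p.2 + 1 : ℤ)))) ∧
    Summable (fun p : ℕ × ℕ => ‖(p.2 + 1 : ℂ) * q ^ ((p.1 + 1) * (p.2 + 1)) *
          (w ^ (p.2 + 1) + w ^ (-(p.2 + 1 : ℤ)))‖) := by
  have hq_pos : 0 < ‖q‖ := inv_pos.mp ((norm_nonneg w).trans_lt h2)
  have hq : ‖q‖ < 1 := by
    by_contra! h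
    exact (h1.trans h2).not_ge ((inv_le_one_of_one_le₀ h).trans h)
  have hqw : ‖q * w‖ < 1 := by rwa [norm_mul, ← lt_inv_mul_iff₀ hq_pos, mul_one]
  have hqw' : ‖q * w⁻¹‖ < 1 := by
    rwa [norm_mul, norm_inv, ← div_eq_mul_inv, div_lt_one (hq_pos.trans h1)]
  have hsplit : ∀ p : ℕ × ℕ, (p.2 + 1 : ℂ) * q ^ ((p.1 + 1) * (p.2 + 1)) *
      (w ^ (p.2 + 1) + w ^ (-(p.2 + 1 : ℤ))) =
      (p.2 + 1 : ℂ) * q ^ ((p.1 + 1) * (p.2 + 1)) * w ^ (p.2 + 1) +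
        (p.2 + 1 : ℂ) * q ^ ((p.1 + 1) * (p.2 + 1)) * w⁻¹ ^ (p.2 + 1) := fun p => by
    rw [mul_add, inv_pow, ← zpow_natCast w (p.2 + 1), ← zpow_neg]
    push_cast
    rfl
  have hA := summable_norm_lambert_double_series hq hqw
  have hB := summable_norm_lambert_double_series hq hqw'
  have hpos := (hasSum_nat_add_iff (f := fun n : ℕ => q ^ (n : ℤ) * w / (1 - q ^ (n : ℤ) * w) ^ 2)
    1).mp (by simpa only [zpow_natCast] using hasSum_lambert_double_series hq hqw)
  have hneg : HasSum (fun n : ℕ => q ^ (-(n + 1 : ℤ)) * w / (1 - q ^ (-(n + 1 : ℤ)) * w) ^ 2)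
      (∑' p : ℕ × ℕ, (p.2 + 1 : ℂ) * q ^ ((p.1 + 1) * (p.2 + 1)) * w⁻¹ ^ (p.2 + 1)) := by
    have hinv : ∀ n : ℕ, q ^ (-(n + 1 : ℤ)) * w = (q ^ (n + 1) * w⁻¹)⁻¹ := fun n => by
      rw [mul_inv, inv_inv, ← zpow_natCast, ← zpow_neg]
      push_cast
      rfl
    simpa only [hinv, inv_div_one_sub_inv_sq] using hasSum_lambert_double_series hq hqw'
  have htotal := HasSum.of_nat_of_neg_add_one
    (f := fun n : ℤ => q ^ n * w / (1 - q ^ n * w) ^ 2) hpos hneg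
  refine ⟨?_, ?_⟩
  · rw [htotal.tsum_eq, tsum_congr hsplit, hA.of_norm.tsum_add hB.of_norm]
    simp only [Finset.sum_range_one, Nat.cast_zero, zpow_zero, one_mul]
    ring
  · exact (hA.add hB).of_nonneg_of_le (fun _ => norm_nonneg _) fun p => by
      rw [hsplit]; exact norm_add_le _ _

/-- Rearrangement of the Tate-curve coordinate series: for `|q| < |w| < |q|⁻¹`, `w ≠ 1`,
`∑_{n ∈ ℤ} qⁿw/(1-qⁿw)² = w/(1-w)² + ∑_{n,m ≥ 1} m qⁿᵐ (wᵐ + w⁻ᵐ)`, the double series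
converging absolutely. -/
theorem tate_x_series_rearrangement (q w : ℂ) (hq0 : q ≠ 0) (hw1 : w ≠ 1)
    (h1 : ‖q‖ < ‖w‖)
    (h2 : ‖w‖ < (‖q‖)⁻¹) :
    (∑' n : ℤ, q ^ n * w / (1 - q ^ n * w) ^ 2) =
      w / (1 - w) ^ 2 +
        ∑' p : ℕ × ℕ, ((p.2 + 1 : ℂ) * q ^ ((p.1 + 1) * (p.2 + 1)) *
          (w ^ (p.2 + 1) + w ^ (-(p.2 + 1 : ℤ)))) ∧
    Summable (fun p : ℕ × ℕ => ‖(p.2 + 1 : ℂ) * q ^ ((p.1 + 1) * (p.2 + 1)) *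
          (w ^ (p.2 + 1) + w ^ (-(p.2 + 1 : ℤ)))‖) :=
  tate_x_series_rearrangement_general q w h1 h2
end
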